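/- Define v : ℝ → ℝ by v(x) := exp(−x²/2)·π^(−1/2)·∫₀^∞ exp(−t² − 2xt)·t^(−1/2) dt. Then v is twice differentiable on ℝ and satisfies v″(x) = x²·v(x) for every real x. -/

import Mathlib

/-!
Write `I_a(x) = ∫₀^∞ e^{-t²-2xt} t^a dt` for `a > -1`, so that `v = π^{-1/2} e^{-x²/2} I_{-1/2}`.
Differentiating under the integral sign gives `I_a' = -2 I_{a+1}`, and integrating
`d/dt (t^{a+1} e^{-t²-2xt})` over `(0, ∞)` gives the recurrence
`2 I_{a+2} + 2x I_{a+1} = (a+1) I_a`. Differentiating `v` twice and using the recurrence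
at `a = -1/2` leaves exactly `x² v`.
-/

open Set Real MeasureTheory

/-- `v(x) = e^(−x²/2) · H_{−1/2}(x)` via the integral representation
`H_{−1/2}(x) = π^(−1/2) ∫₀^∞ e^(−t² − 2xt) t^(−1/2) dt`. -/
noncomputable def vFun (x : ℝ) : ℝ :=
  Real.exp (-x ^ 2 / 2) * π ^ (-(1 / 2) : ℝ) *
    ∫ t in Set.Ioi (0 : ℝ), Real.exp (-t ^ 2 - 2 * x * t) * t ^ (-(1 / 2) : ℝ)

noncomputable def gaussianMoment (a x : ℝ) : ℝ :=
  ∫ t in Ioi (0 : ℝ), exp (-t ^ 2 - 2 * x * t) * t ^ a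

lemma integrableOn_gaussianMoment (x : ℝ) {a : ℝ} (ha : -1 < a) :
    IntegrableOn (fun t : ℝ => exp (-t ^ 2 - 2 * x * t) * t ^ a) (Ioi 0) := by
  have hdom : IntegrableOn (fun t : ℝ => exp (2 * x ^ 2) * (t ^ a * exp (-(1 / 2) * t ^ 2)))
      (Ioi 0) :=
    (integrableOn_rpow_mul_exp_neg_mul_sq (by norm_num) ha).const_mul _
  refine hdom.mono' (by fun_prop) ?_
  filter_upwards [ae_restrict_mem measurableSet_Ioi] with t (ht : 0 < t)
  -- `-t² - 2xt ≤ 2x² - t²/2` is `(t + 2x)² ≥ 0`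
  have hexp : exp (-t ^ 2 - 2 * x * t) ≤ exp (2 * x ^ 2) * exp (-(1 / 2) * t ^ 2) := by
    rw [← exp_add]
    exact exp_le_exp.2 (by nlinarith [sq_nonneg (t + 2 * x)])
  rw [norm_of_nonneg (by positivity)]
  calc exp (-t ^ 2 - 2 * x * t) * t ^ a
      ≤ exp (2 * x ^ 2) * exp (-(1 / 2) * t ^ 2) * t ^ a := by gcongr
    _ = exp (2 * x ^ 2) * (t ^ a * exp (-(1 / 2) * t ^ 2)) := by ring

lemma hasDerivAt_gaussianMoment {a : ℝ} (ha : -1 < a) (x₀ : ℝ) :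
    HasDerivAt (gaussianMoment a) (-2 * gaussianMoment (a + 1) x₀) x₀ := by
  set x₁ := -(|x₀| + 1)
  have hx₁ : ∀ x ∈ Metric.ball x₀ 1, x₁ ≤ x := fun x hx => by
    rw [Metric.mem_ball, Real.dist_eq] at hx
    linarith [neg_abs_le x₀, (abs_lt.1 hx).1]
  have hparam := hasDerivAt_integral_of_dominated_loc_of_deriv_le (μ := volume.restrict (Ioi 0))
    (F := fun x t => exp (-t ^ 2 - 2 * x * t) * t ^ a)
    (F' := fun x t => -2 * (exp (-t ^ 2 - 2 * x * t) * t ^ (a + 1)))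
    (bound := fun t => 2 * (exp (-t ^ 2 - 2 * x₁ * t) * t ^ (a + 1)))
    (Metric.ball_mem_nhds x₀ one_pos) (.of_forall fun _ => by fun_prop)
    (integrableOn_gaussianMoment x₀ ha) (by fun_prop) ?bound
    ((integrableOn_gaussianMoment x₁ (by linarith)).const_mul 2) ?diff
  · rw [gaussianMoment, ← integral_const_mul]
    exact hparam.2
  case bound =>
    filter_upwards [ae_restrict_mem measurableSet_Ioi] with t (ht : 0 < t) x hx
    rw [norm_mul, norm_neg, Real.norm_ofNat,
      norm_of_nonneg (by positivity : 0 ≤ exp (-t ^ 2 - 2 * x * t) * t ^ (a + 1))]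
    gcongr
    exact hx₁ x hx
  case diff =>
    filter_upwards [ae_restrict_mem measurableSet_Ioi] with t (ht : 0 < t) x _
    have hlin : HasDerivAt (fun x : ℝ => -t ^ 2 - 2 * x * t) (-(2 * 1 * t)) x :=
      (((hasDerivAt_id x).const_mul 2).mul_const t).const_sub (-t ^ 2)
    refine (hlin.exp.mul_const (t ^ a)).congr_deriv ?_
    rw [rpow_add_one ht.ne']
    ring

lemma tendsto_rpow_mul_exp_neg_sq_sub_atTop (a x : ℝ) :
    Filter.Tendsto (fun t : ℝ => t ^ a * exp (-t ^ 2 - 2 * x * t)) Filter.atTop (nhds 0) := by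
  refine squeeze_zero' ?_ ?_ (tendsto_rpow_mul_exp_neg_mul_atTop_nhds_zero a 1 one_pos)
  · filter_upwards [Filter.eventually_gt_atTop 0] with t ht
    positivity
  · filter_upwards [Filter.eventually_ge_atTop (2 * |x| + 1)] with t ht
    have ht0 : 0 < t := lt_of_lt_of_le (by positivity) ht
    have : exp (-t ^ 2 - 2 * x * t) ≤ exp (-1 * t) :=
      exp_le_exp.2 (by nlinarith [neg_abs_le x])
    gcongr

lemma gaussianMoment_recurrence {a : ℝ} (ha : -1 < a) (x : ℝ) :
    2 * gaussianMoment (a + 2) x + 2 * x * gaussianMoment (a + 1) x =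
      (a + 1) * gaussianMoment a x := by
  have ha1 : 0 < a + 1 := by linarith
  set E : ℝ → ℝ := fun t => exp (-t ^ 2 - 2 * x * t)
  have hI : ∀ b : ℝ, -1 < b → IntegrableOn (fun t => E t * t ^ b) (Ioi 0) :=
    fun b hb => integrableOn_gaussianMoment x hb
  have hI₀ := (hI a ha).const_mul (a + 1)
  have hI₁ := (hI (a + 1) (by linarith)).const_mul (2 * x)
  have hI₂ := (hI (a + 2) (by linarith)).const_mul 2
  have hderiv : ∀ t ∈ Ioi (0 : ℝ), HasDerivAt (fun t => t ^ (a + 1) * E t)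
      ((a + 1) * (E t * t ^ a) - 2 * x * (E t * t ^ (a + 1)) - 2 * (E t * t ^ (a + 2))) t := by
    intro t (ht : 0 < t)
    have hpow := hasDerivAt_rpow_const (x := t) (p := a + 1) (.inl ht.ne')
    have hexp : HasDerivAt (fun t : ℝ => -t ^ 2 - 2 * x * t) (-2 * t - 2 * x) t := by
      refine (((hasDerivAt_pow 2 t).neg).sub ((hasDerivAt_id t).const_mul (2 * x))).congr_deriv ?_
      ring
    have hsucc : ∀ b : ℝ, t ^ (b + 1) = t ^ b * t := rpow_add_one ht.ne'
    refine (hpow.mul hexp.exp).congr_deriv ?_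
    rw [add_sub_cancel_right, show a + 2 = a + 1 + 1 by ring, hsucc (a + 1), hsucc a]
    ring
  have hcont : ContinuousWithinAt (fun t => t ^ (a + 1) * E t) (Ici 0) 0 :=
    ((continuousAt_rpow_const 0 (a + 1) (.inr ha1.le)).mul (by fun_prop)).continuousWithinAt
  have hIBP := integral_Ioi_of_hasDerivAt_of_tendsto hcont hderiv
    ((hI₀.sub hI₁).sub hI₂) (tendsto_rpow_mul_exp_neg_sq_sub_atTop (a + 1) x)
  rw [integral_sub ?_ hI₂, integral_sub hI₀ hI₁, integral_const_mul,
    integral_const_mul, integral_const_mul, zero_rpow ha1.ne'] at hIBP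
  · simp only [gaussianMoment]
    linarith
  · exact hI₀.sub hI₁

lemma hasDerivAt_exp_neg_sq_div_two_mul {f : ℝ → ℝ} {f' x : ℝ} (hf : HasDerivAt f f' x) :
    HasDerivAt (fun x => exp (-x ^ 2 / 2) * f x) (exp (-x ^ 2 / 2) * (f' - x * f x)) x := by
  have hE : HasDerivAt (fun x : ℝ => -x ^ 2 / 2) (-x) x := by
    refine (((hasDerivAt_pow 2 x).neg).div_const 2).congr_deriv ?_
    ring
  refine (hE.exp.mul hf).congr_deriv ?_
  ring

theorem stmt10 :
    ∃ v' : ℝ → ℝ,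
      (∀ x : ℝ, HasDerivAt vFun (v' x) x) ∧
      (∀ x : ℝ, HasDerivAt v' (x ^ 2 * vFun x) x) := by
  have hrec : ∀ x, 2 * gaussianMoment (-(1 / 2) + 1 + 1) x +
      2 * x * gaussianMoment (-(1 / 2) + 1) x = (-(1 / 2) + 1) * gaussianMoment (-(1 / 2)) x := by
    intro x
    rw [show (-(1 / 2) : ℝ) + 1 + 1 = -(1 / 2) + 2 by ring]
    exact gaussianMoment_recurrence (by norm_num) x
  set c : ℝ := π ^ (-(1 / 2) : ℝ)
  set I : ℝ → ℝ := gaussianMoment (-(1 / 2))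
  set J : ℝ → ℝ := gaussianMoment (-(1 / 2) + 1)
  set K : ℝ → ℝ := gaussianMoment (-(1 / 2) + 1 + 1)
  have hv : vFun = fun x => exp (-x ^ 2 / 2) * (c * I x) := by
    funext x
    rw [vFun, mul_assoc]
    rfl
  have hI : ∀ x, HasDerivAt I (-2 * J x) x := hasDerivAt_gaussianMoment (by norm_num)
  have hJ : ∀ x, HasDerivAt J (-2 * K x) x := hasDerivAt_gaussianMoment (by norm_num)
  refine ⟨fun x => exp (-x ^ 2 / 2) * (c * (-2 * J x) - x * (c * I x)), fun x => ?_, fun x => ?_⟩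
  · rw [hv]
    exact hasDerivAt_exp_neg_sq_div_two_mul ((hI x).const_mul c)
  · have hf : HasDerivAt (fun x => c * (-2 * J x) - x * (c * I x))
        (c * (-2 * (-2 * K x)) - (1 * (c * I x) + x * (c * (-2 * J x)))) x :=
      (((hJ x).const_mul (-2)).const_mul c).sub ((hasDerivAt_id' x).mul ((hI x).const_mul c))
    refine (hasDerivAt_exp_neg_sq_div_two_mul hf).congr_deriv ?_
    rw [hv]
    linear_combination (2 * exp (-x ^ 2 / 2) * c) * hrec x
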